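/- Let F be a set-valued map from a normed space X to R^p, Lipschitz around x, y ∈ F(x) a properly minimal element (y ∈ E(F(x),P) and T_{F(x)+P}(y) ∩ (-P) = {0}). Then DF↑((x,y); 0) ∩ (-P) = {0}, where F↑ = F + P. -/

import Mathlib

open Filter Topology Pointwise

/-- Contingent cone to `S` at `z`. -/
def contingentCone {E : Type*} [NormedAddCommGroup E] [NormedSpace ℝ E]
    (S : Set E) (z : E) : Set E :=
  {v | ∃ h : ℕ → ℝ, ∃ vk : ℕ → E, (∀ k, 0 < h k) ∧ Tendsto h atTop (𝓝 0) ∧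
    Tendsto vk atTop (𝓝 v) ∧ ∀ k, z + h k • vk k ∈ S}

/-- Recession cone of `S`. -/
def recessionCone {E : Type*} [NormedAddCommGroup E] [NormedSpace ℝ E]
    (S : Set E) : Set E :=
  {y | ∃ h : ℕ → ℝ, ∃ yk : ℕ → E, (∀ k, 0 < h k) ∧ Tendsto h atTop (𝓝 0) ∧
    (∀ k, yk k ∈ S) ∧ Tendsto (fun k => h k • yk k) atTop (𝓝 y)}

/-- Set of minimal elements of `S` with respect to the ordering cone `P`. -/
def minimalSet {E : Type*} [NormedAddCommGroup E] [NormedSpace ℝ E]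
    (S P : Set E) : Set E :=
  {y | y ∈ S ∧ ((fun d => y - d) '' P) ∩ S = {y}}

/-- Contingent derivative of a set-valued map `F` at `(x, y)` in direction `v`. -/
def contDeriv {X E : Type*} [NormedAddCommGroup X] [NormedSpace ℝ X]
    [NormedAddCommGroup E] [NormedSpace ℝ E]
    (F : X → Set E) (x : X) (y : E) (v : X) : Set E :=
  {w | ∃ h : ℕ → ℝ, ∃ vk : ℕ → X, ∃ wk : ℕ → E, (∀ k, 0 < h k) ∧
    Tendsto h atTop (𝓝 0) ∧ Tendsto vk atTop (𝓝 v) ∧ Tendsto wk atTop (𝓝 w) ∧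
    ∀ k, y + h k • wk k ∈ F (x + h k • vk k)}

/-- `F` is Lipschitz (with constant `l`) on a neighborhood of `x`. -/
def LipschitzAround {X E : Type*} [NormedAddCommGroup X] [NormedSpace ℝ X]
    [NormedAddCommGroup E] [NormedSpace ℝ E]
    (F : X → Set E) (x : X) (l : ℝ) : Prop :=
  ∃ O ∈ 𝓝 x, ∀ x1 ∈ O, ∀ x2 ∈ O,
    F x1 ⊆ F x2 + Metric.closedBall (0 : E) (l * ‖x1 - x2‖)

/-
Adding `P` preserves the Lipschitz property, and for a map `G` that is Lipschitz
around `x`, a tangent direction `w` of the graph of `G` over the zero direction is tangent to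
`G x` itself, because the Lipschitz bound moves `y + h • w ∈ G (x + h • v)` into `G x` at a cost
of order `h ‖v‖ → 0`. Hence `DF↑((x, y); 0) ⊆ T_{F(x)+P}(y)`, and proper minimality leaves only
`0` in its intersection with `-P`.
-/

section

variable {X E : Type*} [NormedAddCommGroup X] [NormedSpace ℝ X]
  [NormedAddCommGroup E] [NormedSpace ℝ E]

theorem mem_contingentCone_of_eventually {S : Set E} {z v : E} {h : ℕ → ℝ} {vk : ℕ → E}
    (hpos : ∀ k, 0 < h k) (hh : Tendsto h atTop (𝓝 0)) (hv : Tendsto vk atTop (𝓝 v))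
    (hS : ∀ᶠ k in atTop, z + h k • vk k ∈ S) : v ∈ contingentCone S z := by
  obtain ⟨N, hN⟩ := eventually_atTop.mp hS
  exact ⟨fun k => h (k + N), fun k => vk (k + N), fun k => hpos (k + N),
    hh.comp (tendsto_add_atTop_nat N), hv.comp (tendsto_add_atTop_nat N),
    fun k => hN (k + N) (Nat.le_add_left N k)⟩

theorem exists_norm_le_add_smul_sub_mem {S T : Set E} {y w : E} {h r : ℝ} (hh : 0 < h)
    (hST : S ⊆ T + Metric.closedBall 0 (h * r)) (hw : y + h • w ∈ S) :
    ∃ b : E, ‖b‖ ≤ r ∧ y + h • (w - b) ∈ T := by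
  obtain ⟨t, ht, c, hc, htc⟩ := Set.mem_add.mp (hST hw)
  rw [mem_closedBall_zero_iff] at hc
  refine ⟨h⁻¹ • c, ?_, ?_⟩
  · rw [norm_smul, Real.norm_of_nonneg (inv_nonneg.mpr hh.le)]
    calc h⁻¹ * ‖c‖ ≤ h⁻¹ * (h * r) := by gcongr
      _ = r := by field_simp
  · have : y + h • (w - h⁻¹ • c) = t := by
      rw [smul_sub, smul_inv_smul₀ hh.ne']
      linear_combination (norm := module) htc.symm
    exact this ▸ ht

theorem LipschitzAround.add_set {F : X → Set E} {x : X} {l : ℝ} (hF : LipschitzAround F x l)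
    (P : Set E) : LipschitzAround (fun x' => F x' + P) x l := by
  obtain ⟨O, hO, hFO⟩ := hF
  refine ⟨O, hO, fun x1 hx1 x2 hx2 => ?_⟩
  calc F x1 + P ⊆ F x2 + Metric.closedBall 0 (l * ‖x1 - x2‖) + P :=
        Set.add_subset_add_right (hFO x1 hx1 x2 hx2)
    _ = F x2 + P + Metric.closedBall 0 (l * ‖x1 - x2‖) := add_right_comm _ _ _

theorem LipschitzAround.contDeriv_zero_subset_contingentCone {G : X → Set E} {x : X} {l : ℝ}
    (hG : LipschitzAround G x l) (y : E) : contDeriv G x y 0 ⊆ contingentCone (G x) y := by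
  rintro w ⟨h, vk, wk, hpos, hh, hv, hw, hmem⟩
  obtain ⟨O, hO, hGO⟩ := hG
  have hxO : ∀ᶠ k in atTop, x + h k • vk k ∈ O := by
    have : Tendsto (fun k => x + h k • vk k) atTop (𝓝 (x + (0 : ℝ) • (0 : X))) :=
      tendsto_const_nhds.add (hh.smul hv)
    rw [zero_smul, add_zero] at this
    exact this.eventually_mem hO
  have hshift : ∀ k, ∃ b : E, x + h k • vk k ∈ O →
      ‖b‖ ≤ l * ‖vk k‖ ∧ y + h k • (wk k - b) ∈ G x := by
    intro k
    by_cases hk : x + h k • vk k ∈ O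
    · have hball : l * ‖x + h k • vk k - x‖ = h k * (l * ‖vk k‖) := by
        rw [add_sub_cancel_left, norm_smul, Real.norm_of_nonneg (hpos k).le]
        ring
      obtain ⟨b, hb⟩ := exists_norm_le_add_smul_sub_mem (hpos k)
        (hball ▸ hGO _ hk x (mem_of_mem_nhds hO)) (hmem k)
      exact ⟨b, fun _ => hb⟩
    · exact ⟨0, fun h => absurd h hk⟩
  choose b hb using hshift
  have hb0 : Tendsto b atTop (𝓝 0) := by
    refine squeeze_zero_norm' (hxO.mono fun k hk => (hb k hk).1) ?_
    simpa using (hv.norm.const_mul l)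
  exact mem_contingentCone_of_eventually hpos hh (by simpa using hw.sub hb0)
    (hxO.mono fun k hk => (hb k hk).2)

theorem zero_mem_contDeriv_zero {G : X → Set E} {x : X} {y : E} (hy : y ∈ G x) :
    (0 : E) ∈ contDeriv G x y 0 := by
  refine ⟨fun k => 1 / ((k : ℝ) + 1), fun _ => 0, fun _ => 0, fun k => by positivity,
    tendsto_one_div_add_atTop_nhds_zero_nat, tendsto_const_nhds, tendsto_const_nhds,
    fun k => ?_⟩
  simpa using hy

end

theorem stmt13_general {p : ℕ} {X : Type*} [NormedAddCommGroup X] [NormedSpace ℝ X]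
    (P : Set (EuclideanSpace ℝ (Fin p)))
    (hP0 : (0 : EuclideanSpace ℝ (Fin p)) ∈ P)
    (F : X → Set (EuclideanSpace ℝ (Fin p))) (x : X) (l : ℝ)
    (hLip : LipschitzAround F x l)
    (y : EuclideanSpace ℝ (Fin p))
    (hymin : y ∈ minimalSet (F x) P)
    (hyproper : contingentCone (F x + P) y ∩ (-P) = {0}) :
    contDeriv (fun x' => F x' + P) x y 0 ∩ (-P) = {0} := by
  refine subset_antisymm ?_ ?_
  · rw [← hyproper]
    exact Set.inter_subset_inter_left _
      ((hLip.add_set P).contDeriv_zero_subset_contingentCone y)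
  · rw [Set.singleton_subset_iff]
    refine ⟨zero_mem_contDeriv_zero ?_, by simpa using hP0⟩
    simpa using Set.add_mem_add hymin.1 hP0

theorem stmt13 {p : ℕ} {X : Type*} [NormedAddCommGroup X] [NormedSpace ℝ X]
    (P : Set (EuclideanSpace ℝ (Fin p)))
    (hPconv : Convex ℝ P) (hPcone : ∀ (c : ℝ), 0 ≤ c → ∀ x ∈ P, c • x ∈ P)
    (hPclosed : IsClosed P) (hP0 : (0 : EuclideanSpace ℝ (Fin p)) ∈ P)
    (hPpointed : P ∩ (-P) = {0}) (hPint : (interior P).Nonempty)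
    (F : X → Set (EuclideanSpace ℝ (Fin p))) (x : X) (l : ℝ) (hl : 0 ≤ l)
    (hLip : LipschitzAround F x l)
    (y : EuclideanSpace ℝ (Fin p))
    (hymin : y ∈ minimalSet (F x) P)
    (hyproper : contingentCone (F x + P) y ∩ (-P) = {0}) :
    contDeriv (fun x' => F x' + P) x y 0 ∩ (-P) = {0} :=
  stmt13_general P hP0 F x l hLip y hymin hyproper
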